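/- arXiv:0712.2900 — 12 statements merged into one kernel-verified Lean document; each statement's English description precedes it below -/
import Mathlib

section
/- Let f_n, g_n, h_n, a0_n, a1_n, a2_n (n ∈ ℤ) be real-valued differentiable functions of x ∈ ℝ satisfying for all n ∈ ℤ and all x: (d/dx) f_n = f_n·a0_{n+1} − f_n·a0_n + g_n·f_n − g_{n+1}·f_n; (d/dx) a0_n = f_n·a1_{n+1} − f_{n−1}·a1_n + h_n·f_{n−1} − h_{n+1}·f_n; and (d/dx) a1_n = f_n·a2_{n+1} − f_{n−2}·a2_n + g_n·a1_n − g_{n−1}·a1_n + h_n·a0_{n−1} − h_n·a0_n. Define σ_n := f_{n−1}·(a1_n − h_n). Then for all n and x: (d/dx)[h_n·f_{n−1} + (1/2)(a0_n)² + σ_n] = [f_n·f_{n−1}·a2_{n+1} + σ_{n+1}·a0_n] − [f_{n−1}·f_{n−2}·a2_n + σ_n·a0_{n−1}]. -/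
/-!
Since `σₙ = fₙ₋₁ (a¹ₙ - hₙ)`, the term `hₙ fₙ₋₁` cancels and the density is
`ρ⁽²⁾ₙ = fₙ₋₁ a¹ₙ + ½ (a⁰ₙ)²`, with derivative `f'ₙ₋₁ a¹ₙ + fₙ₋₁ (a¹ₙ)' + a⁰ₙ (a⁰ₙ)'`.
Substituting the coefficient equations, the terms containing `g` and `h` cancel and what
remains is a difference of shifted fluxes.
-/

theorem HasDerivAt.mul_add_half_sq {𝕜 : Type*} [NontriviallyNormedField 𝕜] [CharZero 𝕜]
    {u v w : 𝕜 → 𝕜} {u' v' w' x : 𝕜}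
    (hu : HasDerivAt u u' x) (hv : HasDerivAt v v' x) (hw : HasDerivAt w w' x) :
    HasDerivAt (fun t => u t * v t + (1/2) * (w t)^2) (u' * v x + u x * v' + w x * w') x := by
  refine ((hu.mul hv).add ((hw.pow 2).const_mul (1/2))).congr_deriv ?_
  field_simp
  ring

theorem formal_symmetry_third_conservation_law_general
    (f g h a0 a1 a2 : ℤ → ℝ → ℝ)
    (hf : ∀ n, Differentiable ℝ (f n))
    (ha0 : ∀ n, Differentiable ℝ (a0 n))
    (ha1 : ∀ n, Differentiable ℝ (a1 n))
    (eq1 : ∀ n x, deriv (f n) x =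
      f n x * a0 (n+1) x - f n x * a0 n x + g n x * f n x - g (n+1) x * f n x)
    (eq2 : ∀ n x, deriv (a0 n) x =
      f n x * a1 (n+1) x - f (n-1) x * a1 n x
        + h n x * f (n-1) x - h (n+1) x * f n x)
    (eq3 : ∀ n x, deriv (a1 n) x =
      f n x * a2 (n+1) x - f (n-2) x * a2 n x
        + g n x * a1 n x - g (n-1) x * a1 n x
        + h n x * a0 (n-1) x - h n x * a0 n x)
    (σ : ℤ → ℝ → ℝ)
    (hσ : ∀ n x, σ n x = f (n-1) x * (a1 n x - h n x)) :
    ∀ n x, deriv (fun t => h n t * f (n-1) t + (1/2) * (a0 n t)^2 + σ n t) x =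
      (f n x * f (n-1) x * a2 (n+1) x + σ (n+1) x * a0 n x)
        - (f (n-1) x * f (n-2) x * a2 n x + σ n x * a0 (n-1) x) := by
  intro n x
  have density_eq : (fun t => h n t * f (n-1) t + (1/2) * (a0 n t)^2 + σ n t)
      = fun t => f (n-1) t * a1 n t + (1/2) * (a0 n t)^2 := by
    funext t
    rw [hσ]
    ring
  rw [density_eq, ((hf (n-1) x).hasDerivAt.mul_add_half_sq
    (ha1 n x).hasDerivAt (ha0 n x).hasDerivAt).deriv]
  simp only [eq1, eq2, eq3, hσ, sub_add_cancel, add_sub_cancel_right]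
  ring

/-- the third integrability condition (conservation law for
`ρ⁽²⁾ = h f₋₁ + ½ (a⁰)² + σ`) follows from the equations for the coefficients
of a formal symmetry of a Volterra-type lattice. -/
theorem formal_symmetry_third_conservation_law
    (f g h a0 a1 a2 : ℤ → ℝ → ℝ)
    (hf : ∀ n, Differentiable ℝ (f n)) (hg : ∀ n, Differentiable ℝ (g n))
    (hh : ∀ n, Differentiable ℝ (h n)) (ha0 : ∀ n, Differentiable ℝ (a0 n))
    (ha1 : ∀ n, Differentiable ℝ (a1 n)) (ha2 : ∀ n, Differentiable ℝ (a2 n))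
    (eq1 : ∀ n x, deriv (f n) x =
      f n x * a0 (n+1) x - f n x * a0 n x + g n x * f n x - g (n+1) x * f n x)
    (eq2 : ∀ n x, deriv (a0 n) x =
      f n x * a1 (n+1) x - f (n-1) x * a1 n x
        + h n x * f (n-1) x - h (n+1) x * f n x)
    (eq3 : ∀ n x, deriv (a1 n) x =
      f n x * a2 (n+1) x - f (n-2) x * a2 n x
        + g n x * a1 n x - g (n-1) x * a1 n x
        + h n x * a0 (n-1) x - h n x * a0 n x)
    (σ : ℤ → ℝ → ℝ)
    (hσ : ∀ n x, σ n x = f (n-1) x * (a1 n x - h n x)) :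
    ∀ n x, deriv (fun t => h n t * f (n-1) t + (1/2) * (a0 n t)^2 + σ n t) x =
      (f n x * f (n-1) x * a2 (n+1) x + σ (n+1) x * a0 n x)
        - (f (n-1) x * f (n-2) x * a2 n x + σ n x * a0 (n-1) x) :=
  formal_symmetry_third_conservation_law_general f g h a0 a1 a2 hf ha0 ha1 eq1 eq2 eq3 σ hσ
end

section
/- Let R be a commutative ring and let (a_j)_{j∈ℤ} and (b_j)_{j∈ℤ} be finitely supported families of sequences a_j, b_j : ℤ → R. Define the difference operators A = Σ_j a_j T^j and B = Σ_j b_j T^j acting on sequences s : ℤ → R by (a T^j)(s)_n = a_n · s_{n+j}, so that the coefficient of T^0 in the composition AB is res(AB) := Σ_j a_j · T^j(b_{−j}), where (T^m c)_n := c_{n+m} for a sequence c. Then res(AB) − res(BA) = Σ_j (T^j − 1)(b_{−j} · T^{−j}(a_j)) (a finite sum, products of sequences taken pointwise); in particular, since T^j − 1 factors through T − 1, the residue of the commutator [A,B] lies in the image of T − 1, with σ satisfying res([A,B]) = (T−1)σ given explicitly as a finite sum of shifts of products of the coefficients of A and B. -/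
/-!
Writing `F j n := b (-j) n * a j (n - j)`, the `T^0`-coefficient of `AB` at `n` is `∑ⱼ F j (n + j)`
and, after the reindexing `j ↦ -j`, that of `BA` is `∑ⱼ F j n`. So `res [A, B] = ∑ⱼ (T^j - 1) F j`,
and every `T^j - 1` factors through `T - 1`: `T^(j+1) - 1 = (T - 1) T^j + (T^j - 1)`.
-/

open Function

theorem Function.support_apply_subset {ι α G : Type*} [Zero G] (F : ι → α → G) (x : ι → α) :
    support (fun i => F i (x i)) ⊆ support F :=
  fun i hi hFi => hi (by simp [hFi])

section fwdDiff

variable {M G : Type*} [AddCommGroup M] [AddCommGroup G]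

def fwdDiffAddMonoidHom (h : M) : (M → G) →+ (M → G) :=
  AddMonoidHom.mk' (fwdDiff h) (fwdDiff_add h)

theorem fwdDiff_add_step (k h : M) (f : M → G) :
    fwdDiff (k + h) f = fwdDiffAddMonoidHom h (fun y => f (y + k)) + fwdDiff k f := by
  ext y
  simp only [fwdDiffAddMonoidHom, AddMonoidHom.mk'_apply, fwdDiff, Pi.add_apply, add_assoc,
    add_comm h]
  exact (sub_add_sub_cancel _ _ _).symm

theorem fwdDiff_zsmul_mem_range (h : M) (f : M → G) (j : ℤ) :
    fwdDiff (j • h) f ∈ (fwdDiffAddMonoidHom h).range := by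
  induction j using Int.induction_on with
  | zero => exact ⟨0, by ext; simp [fwdDiff]⟩
  | succ j ih =>
    rw [add_smul, one_smul, fwdDiff_add_step]
    exact add_mem ⟨_, rfl⟩ ih
  | pred j ih =>
    have hj : (-j - 1 : ℤ) • h + h = -(j : ℤ) • h := by rw [sub_smul, one_smul, sub_add_cancel]
    rw [← hj, fwdDiff_add_step] at ih
    exact (AddSubgroup.add_mem_cancel_left _ (AddMonoidHom.mem_range.mpr ⟨_, rfl⟩)).mp ih

theorem finsum_fwdDiff_mem_range {ι : Type*} (h : M) (F : ι → M → G) (s : ι → ℤ)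
    (hF : F.HasFiniteSupport) :
    (fun y => ∑ᶠ i, fwdDiff (s i • h) (F i) y) ∈ (fwdDiffAddMonoidHom h).range := by
  have hfin : (fun i => fwdDiff (s i • h) (F i)).HasFiniteSupport :=
    hF.subset fun i hi hFi => hi (by simp only [hFi]; exact fwdDiff_const _ 0)
  simp only [← finsum_apply hfin]
  exact finsum_induction _ (zero_mem _) (fun _ _ => add_mem)
    fun i => fwdDiff_zsmul_mem_range h (F i) (s i)

end fwdDiff

theorem res_commutator_in_image_of_shift_sub_one_general
    (R : Type*) [CommRing R]
    (a b : ℤ → ℤ → R)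
    (ha : {j : ℤ | a j ≠ 0}.Finite)
    (resAB resBA : ℤ → R)
    (hAB : ∀ n, resAB n = ∑ᶠ j : ℤ, a j n * b (-j) (n + j))
    (hBA : ∀ n, resBA n = ∑ᶠ j : ℤ, b j n * a (-j) (n + j)) :
    (∀ n, resAB n - resBA n =
        ∑ᶠ j : ℤ, ((b (-j) (n + j) * a j ((n + j) - j))
          - (b (-j) n * a j (n - j)))) ∧
      ∃ σ : ℤ → R, ∀ n, resAB n - resBA n = σ (n + 1) - σ n := by
  set F : ℤ → ℤ → R := fun j n => b (-j) n * a j (n - j)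
  have hF : F.HasFiniteSupport := ha.subset fun j hj haj => hj (by ext; simp [F, haj])
  have hAB' : ∀ n, resAB n = ∑ᶠ j, F j (n + j) := fun n => by
    simp only [hAB, F, add_sub_cancel_right, mul_comm]
  have hBA' : ∀ n, resBA n = ∑ᶠ j, F j n := fun n => by
    rw [hBA, ← finsum_comp_equiv (Equiv.neg ℤ)]
    simp [F, sub_eq_add_neg]
  have hres : ∀ n, resAB n - resBA n = ∑ᶠ j, fwdDiff (j • 1) (F j) n := fun n => by
    rw [hAB', hBA', ← finsum_sub_distrib (hF.subset (support_apply_subset F (n + ·)))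
      (hF.subset (support_apply_subset F fun _ => n))]
    simp [fwdDiff]
  refine ⟨fun n => (hres n).trans (by simp [fwdDiff, F]), ?_⟩
  obtain ⟨σ, hσ⟩ := finsum_fwdDiff_mem_range (1 : ℤ) F id hF
  exact ⟨σ, fun n => (hres n).trans (congrFun hσ n).symm⟩

/-- the residue of a commutator of difference operators lies in
the image of `T - 1`, with an explicit `σ`.  Here `a j : ℤ → R` is the
coefficient of `T^j` in `A` (finitely many nonzero), and
`res (A∘B) n = ∑ⱼ (a j n) * (b (-j) (n+j))`. -/
theorem res_commutator_in_image_of_shift_sub_one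
    (R : Type*) [CommRing R]
    (a b : ℤ → ℤ → R)
    (ha : {j : ℤ | a j ≠ 0}.Finite) (hb : {j : ℤ | b j ≠ 0}.Finite)
    (resAB resBA : ℤ → R)
    (hAB : ∀ n, resAB n = ∑ᶠ j : ℤ, a j n * b (-j) (n + j))
    (hBA : ∀ n, resBA n = ∑ᶠ j : ℤ, b j n * a (-j) (n + j)) :
    (∀ n, resAB n - resBA n =
        ∑ᶠ j : ℤ, ((b (-j) (n + j) * a j ((n + j) - j))
          - (b (-j) n * a j (n - j)))) ∧
      ∃ σ : ℤ → R, ∀ n, resAB n - resBA n = σ (n + 1) - σ n :=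
  res_commutator_in_image_of_shift_sub_one_general R a b ha resAB resBA hAB hBA
end

section
/- Let X be a nonempty set and let φ, ψ : X×X×X → ℝ be functions with ψ nowhere zero, satisfying φ(u,v,w) + ψ(u,v,w)·φ(s,u,t) = 0 for all u, v, w, s, t ∈ X. Then there exists a function χ : X → ℝ such that φ(u,v,w) = χ(v) for all u, v, w ∈ X (i.e. φ depends only on its middle argument), and χ(v) + ψ(u,v,w)·χ(u) = 0 for all u, v, w ∈ X; moreover, either χ is identically zero or χ is nowhere zero. -/
/-! Solving `φ(u,v,w) + ψ(u,v,w) φ(s,u,t) = 0` for `φ(s,u,t)` and cancelling the nonzero factor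
`ψ(u,u,u)` shows that `φ(s,u,t)` does not depend on `s` and `t`, so `χ v := φ(v,v,v)` works. The
relation for `χ` then says that a zero of `χ` at `u` propagates to every `v`. -/

section

variable {X R : Type*} [Ring R]

theorem forall_eq_zero_or_forall_ne_zero_of_add_mul_eq_zero {χ : X → R} {c : X → X → R}
    (h : ∀ u v, χ v + c u v * χ u = 0) : (∀ v, χ v = 0) ∨ ∀ v, χ v ≠ 0 := by
  refine or_iff_not_imp_right.mpr fun hne => ?_
  obtain ⟨u, hu⟩ := not_forall_not.mp hne
  intro v
  simpa [hu] using h u v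

variable [NoZeroDivisors R] {φ ψ : X × X × X → R}
  (hψ : ∀ p, ψ p ≠ 0)
  (hfe : ∀ u v w s t : X, φ (u, v, w) + ψ (u, v, w) * φ (s, u, t) = 0)
include hψ hfe

theorem apply_eq_apply_diag_of_add_mul_eq_zero (s u t : X) : φ (s, u, t) = φ (u, u, u) := by
  refine mul_left_cancel₀ (hψ (u, u, u)) ?_
  exact (eq_neg_of_add_eq_zero_right (hfe u u u s t)).trans
    (eq_neg_of_add_eq_zero_right (hfe u u u u u)).symm

end

theorem phi_depends_only_on_middle_argument_general
    (X : Type*) (φ ψ : X × X × X → ℝ)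
    (hψ : ∀ p, ψ p ≠ 0)
    (hfe : ∀ u v w s t : X, φ (u, v, w) + ψ (u, v, w) * φ (s, u, t) = 0) :
    ∃ χ : X → ℝ,
      (∀ u v w : X, φ (u, v, w) = χ v) ∧
      (∀ u v w : X, χ v + ψ (u, v, w) * χ u = 0) ∧
      ((∀ v, χ v = 0) ∨ (∀ v, χ v ≠ 0)) := by
  have hφ := apply_eq_apply_diag_of_add_mul_eq_zero hψ hfe
  have hχ : ∀ u v w : X, φ (v, v, v) + ψ (u, v, w) * φ (u, u, u) = 0 := fun u v w => by
    rw [← hφ u v w]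
    exact hfe u v w u u
  refine ⟨fun v => φ (v, v, v), hφ, hχ, ?_⟩
  exact forall_eq_zero_or_forall_ne_zero_of_add_mul_eq_zero (c := fun u v => ψ (u, v, u))
    fun u v => hχ u v u

/-- if `φ(u,v,w) + ψ(u,v,w)·φ(s,u,t) = 0` for all `u,v,w,s,t`
with `ψ` nowhere zero, then `φ` depends only on its middle argument,
`χ(v) + ψ(u,v,w)·χ(u) = 0`, and `χ` is either identically zero or nowhere
zero. -/
theorem phi_depends_only_on_middle_argument
    (X : Type*) [Nonempty X] (φ ψ : X × X × X → ℝ)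
    (hψ : ∀ p, ψ p ≠ 0)
    (hfe : ∀ u v w s t : X, φ (u, v, w) + ψ (u, v, w) * φ (s, u, t) = 0) :
    ∃ χ : X → ℝ,
      (∀ u v w : X, φ (u, v, w) = χ v) ∧
      (∀ u v w : X, χ v + ψ (u, v, w) * χ u = 0) ∧
      ((∀ v, χ v = 0) ∨ (∀ v, χ v ≠ 0)) :=
  phi_depends_only_on_middle_argument_general X φ ψ hψ hfe
end

section
/- Let I, J ⊆ ℝ be nonempty open intervals and let f, h : I×I×J → ℝ be smooth and nowhere zero. Suppose that for all u, v, s ∈ I and all w, t ∈ J: (A) ∂_w f(u,v,w)/f(u,v,w)² + (h(u,v,w)/f(u,v,w))·(∂_w f(s,u,t)/f(s,u,t)²) = 0, and (B) ∂_w h(u,v,w)/h(u,v,w)² + (f(u,v,w)/h(u,v,w))·(∂_w h(v,s,t)/h(v,s,t)²) = 0. Then exactly one of the following holds: (Case 1) ∂_w f is nowhere zero, and there exist a smooth nowhere-zero function a : I → ℝ and a smooth function b : I×I → ℝ such that f(u,v,w) = a(v)/(w + b(u,v)) and h(u,v,w) = −a(u)/(w + b(u,v)) for all (u,v,w) ∈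 I×I×J; or (Case 2) ∂_w f ≡ 0 and ∂_w h ≡ 0 on I×I×J. -/
/-- auxiliary: derivative of the third-coordinate slice of a smooth function. -/
lemma volterra_slice_hasDerivAt {U : Set (ℝ × ℝ × ℝ)} (hU : IsOpen U)
    {f : ℝ × ℝ × ℝ → ℝ} (hf : ContDiffOn ℝ (⊤ : ℕ∞) f U)
    {u v w : ℝ} (hp : (u, v, w) ∈ U) :
    HasDerivAt (fun r => f (u, v, r)) (fderiv ℝ f (u, v, w) (0, 0, 1)) w := by
  have hd : DifferentiableAt ℝ f (u, v, w) :=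
    (hf.contDiffAt (hU.mem_nhds hp)).differentiableAt (by simp)
  have hline : HasDerivAt (fun r : ℝ => ((u, v, r) : ℝ × ℝ × ℝ)) ((0, 0, 1) : ℝ × ℝ × ℝ) w :=
    (hasDerivAt_const w u).prodMk ((hasDerivAt_const w v).prodMk (hasDerivAt_id w))
  exact hd.hasFDerivAt.comp_hasDerivAt w hline

/-- auxiliary: smoothness in `v` of the slice derivative. -/
lemma volterra_slice_deriv_contDiffOn {U : Set (ℝ × ℝ × ℝ)} (hU : IsOpen U)
    {f : ℝ × ℝ × ℝ → ℝ} (hf : ContDiffOn ℝ (⊤ : ℕ∞) f U)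
    {u₀ w₀ : ℝ} {I : Set ℝ} (hmem : ∀ v ∈ I, (u₀, v, w₀) ∈ U) :
    ContDiffOn ℝ (⊤ : ℕ∞) (fun v => deriv (fun r => f (u₀, v, r)) w₀) I := by
  have hG : ContDiffOn ℝ (⊤ : ℕ∞) (fderiv ℝ f) U := hf.fderiv_of_isOpen hU (by simp)
  have hι : ContDiff ℝ (⊤ : ℕ∞) (fun v : ℝ => ((u₀, v, w₀) : ℝ × ℝ × ℝ)) :=
    contDiff_const.prodMk (contDiff_id.prodMk contDiff_const)
  have h1 : ContDiffOn ℝ (⊤ : ℕ∞) (fun v : ℝ => fderiv ℝ f (u₀, v, w₀) ((0, 0, 1) : ℝ × ℝ × ℝ)) I := by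
    exact (ContinuousLinearMap.apply ℝ ℝ ((0, 0, 1) : ℝ × ℝ × ℝ)).contDiff.comp_contDiffOn
      (hG.comp hι.contDiffOn (fun v hv => hmem v hv))
  refine h1.congr fun v hv => ?_
  exact (volterra_slice_hasDerivAt hU hf (hmem v hv)).deriv

/-- dichotomy for the dependence of the lattice coefficients on
`w = v_{1,-1}` arising from the first integrability conditions. -/
theorem volterra_case_dichotomy
    (I J : Set ℝ)
    (hI : IsOpen I) (hIc : I.OrdConnected) (hIne : I.Nonempty)
    (hJ : IsOpen J) (hJc : J.OrdConnected) (hJne : J.Nonempty)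
    (f h : ℝ × ℝ × ℝ → ℝ)
    (hfs : ContDiffOn ℝ (⊤ : ℕ∞) f (I ×ˢ I ×ˢ J))
    (hhs : ContDiffOn ℝ (⊤ : ℕ∞) h (I ×ˢ I ×ˢ J))
    (hf0 : ∀ p ∈ I ×ˢ I ×ˢ J, f p ≠ 0)
    (hh0 : ∀ p ∈ I ×ˢ I ×ˢ J, h p ≠ 0)
    (condA : ∀ u ∈ I, ∀ v ∈ I, ∀ s ∈ I, ∀ w ∈ J, ∀ t ∈ J,
      deriv (fun r => f (u, v, r)) w / (f (u, v, w))^2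
        + (h (u, v, w) / f (u, v, w))
            * (deriv (fun r => f (s, u, r)) t / (f (s, u, t))^2) = 0)
    (condB : ∀ u ∈ I, ∀ v ∈ I, ∀ s ∈ I, ∀ w ∈ J, ∀ t ∈ J,
      deriv (fun r => h (u, v, r)) w / (h (u, v, w))^2
        + (f (u, v, w) / h (u, v, w))
            * (deriv (fun r => h (v, s, r)) t / (h (v, s, t))^2) = 0) :
    Xor'
      -- Case 1
      ((∀ u ∈ I, ∀ v ∈ I, ∀ w ∈ J, deriv (fun r => f (u, v, r)) w ≠ 0) ∧
        ∃ a : ℝ → ℝ, ∃ b : ℝ × ℝ → ℝ,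
          ContDiffOn ℝ (⊤ : ℕ∞) a I ∧ (∀ v ∈ I, a v ≠ 0) ∧
          ContDiffOn ℝ (⊤ : ℕ∞) b (I ×ˢ I) ∧
          (∀ u ∈ I, ∀ v ∈ I, ∀ w ∈ J,
            f (u, v, w) = a v / (w + b (u, v)) ∧
            h (u, v, w) = - a u / (w + b (u, v))))
      -- Case 2
      ((∀ u ∈ I, ∀ v ∈ I, ∀ w ∈ J, deriv (fun r => f (u, v, r)) w = 0) ∧
        (∀ u ∈ I, ∀ v ∈ I, ∀ w ∈ J, deriv (fun r => h (u, v, r)) w = 0)) := by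
  obtain ⟨u₀, hu₀⟩ := hIne
  obtain ⟨w₀, hw₀⟩ := hJne
  have hU : IsOpen (I ×ˢ I ×ˢ J) := hI.prod (hI.prod hJ)
  have hmem : ∀ {u v w : ℝ}, u ∈ I → v ∈ I → w ∈ J → (u, v, w) ∈ I ×ˢ I ×ˢ J :=
    fun hu hv hw => ⟨hu, hv, hw⟩
  set φ : ℝ → ℝ := fun v => deriv (fun r => f (u₀, v, r)) w₀ / (f (u₀, v, w₀))^2 with hφdef
  set ψ : ℝ → ℝ := fun v => deriv (fun r => h (v, u₀, r)) w₀ / (h (v, u₀, w₀))^2 with hψdef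
  -- F depends only on the second argument
  have Fφ : ∀ u ∈ I, ∀ v ∈ I, ∀ w ∈ J,
      deriv (fun r => f (u, v, r)) w / (f (u, v, w))^2 = φ v := by
    intro u hu v hv w hw
    have h1 := condA v hv u₀ hu₀ u hu w₀ hw₀ w hw
    have h2 := condA v hv u₀ hu₀ u₀ hu₀ w₀ hw₀ w₀ hw₀
    have hc : h (v, u₀, w₀) / f (v, u₀, w₀) ≠ 0 :=
      div_ne_zero (hh0 _ (hmem hv hu₀ hw₀)) (hf0 _ (hmem hv hu₀ hw₀))
    have h3 : (h (v, u₀, w₀) / f (v, u₀, w₀))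
        * (deriv (fun r => f (u, v, r)) w / (f (u, v, w))^2
           - deriv (fun r => f (u₀, v, r)) w₀ / (f (u₀, v, w₀))^2) = 0 := by
      linear_combination h1 - h2
    have := (mul_eq_zero.mp h3).resolve_left hc
    have := sub_eq_zero.mp this
    exact this
  have Hψ : ∀ v ∈ I, ∀ s ∈ I, ∀ t ∈ J,
      deriv (fun r => h (v, s, r)) t / (h (v, s, t))^2 = ψ v := by
    intro v hv s hs t ht
    have h1 := condB u₀ hu₀ v hv s hs w₀ hw₀ t ht
    have h2 := condB u₀ hu₀ v hv u₀ hu₀ w₀ hw₀ w₀ hw₀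
    have hc : f (u₀, v, w₀) / h (u₀, v, w₀) ≠ 0 :=
      div_ne_zero (hf0 _ (hmem hu₀ hv hw₀)) (hh0 _ (hmem hu₀ hv hw₀))
    have h3 : (f (u₀, v, w₀) / h (u₀, v, w₀))
        * (deriv (fun r => h (v, s, r)) t / (h (v, s, t))^2
           - deriv (fun r => h (v, u₀, r)) w₀ / (h (v, u₀, w₀))^2) = 0 := by
      linear_combination h1 - h2
    have := (mul_eq_zero.mp h3).resolve_left hc
    exact sub_eq_zero.mp this
  -- derivative formulas
  have derf : ∀ u ∈ I, ∀ v ∈ I, ∀ w ∈ J,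
      deriv (fun r => f (u, v, r)) w = φ v * (f (u, v, w))^2 := by
    intro u hu v hv w hw
    have := Fφ u hu v hv w hw
    have hne : (f (u, v, w))^2 ≠ 0 := pow_ne_zero 2 (hf0 _ (hmem hu hv hw))
    field_simp at this
    rw [div_eq_iff hne] at this
    linarith
  have derh : ∀ u ∈ I, ∀ v ∈ I, ∀ w ∈ J,
      deriv (fun r => h (u, v, r)) w = ψ u * (h (u, v, w))^2 := by
    intro u hu v hv w hw
    have := Hψ u hu v hv w hw
    have hne : (h (u, v, w))^2 ≠ 0 := pow_ne_zero 2 (hh0 _ (hmem hu hv hw))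
    field_simp at this
    rw [div_eq_iff hne] at this
    linarith
  -- the algebraic relations A' and B'
  have A' : ∀ u ∈ I, ∀ v ∈ I, ∀ w ∈ J,
      φ v * f (u, v, w) + φ u * h (u, v, w) = 0 := by
    intro u hu v hv w hw
    have h1 := condA u hu v hv u₀ hu₀ w hw w₀ hw₀
    rw [Fφ u hu v hv w hw, Fφ u₀ hu₀ u hu w₀ hw₀] at h1
    have hfne := hf0 _ (hmem hu hv hw)
    field_simp at h1
    linarith
  have B' : ∀ u ∈ I, ∀ v ∈ I, ∀ w ∈ J,
      ψ u * h (u, v, w) + ψ v * f (u, v, w) = 0 := by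
    intro u hu v hv w hw
    have h1 := condB u hu v hv u₀ hu₀ w hw w₀ hw₀
    rw [Hψ u hu v hv w hw, Hψ v hv u₀ hu₀ w₀ hw₀] at h1
    have hhne := hh0 _ (hmem hu hv hw)
    field_simp at h1
    linarith
  by_cases hc : ∃ v ∈ I, φ v = 0
  · -- Case 2
    obtain ⟨v₀, hv₀, hφv₀⟩ := hc
    have φ0 : ∀ v ∈ I, φ v = 0 := by
      intro v hv
      have := A' v₀ hv₀ v hv w₀ hw₀
      rw [hφv₀] at this
      have hfne := hf0 _ (hmem hv₀ hv hw₀)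
      simp only [zero_mul, add_zero] at this
      exact (mul_eq_zero.mp this).resolve_right hfne
    have df0 : ∀ u ∈ I, ∀ v ∈ I, ∀ w ∈ J, deriv (fun r => f (u, v, r)) w = 0 := by
      intro u hu v hv w hw
      rw [derf u hu v hv w hw, φ0 v hv, zero_mul]
    have ψ0 : ∀ v ∈ I, ψ v = 0 := by
      intro x hx
      by_contra hψx
      -- h(x,x,·) = -f(x,x,·) on J
      have heq : ∀ w ∈ J, h (x, x, w) = -f (x, x, w) := by
        intro w hw
        have := B' x hx x hx w hw
        have : ψ x * (h (x, x, w) + f (x, x, w)) = 0 := by linear_combination this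
        have := (mul_eq_zero.mp this).resolve_left hψx
        linarith
      have hdh : deriv (fun r => h (x, x, r)) w₀ = deriv (fun r => -f (x, x, r)) w₀ := by
        apply Filter.EventuallyEq.deriv_eq
        filter_upwards [hJ.mem_nhds hw₀] with r hr
        exact heq r hr
      have hdf : deriv (fun r => -f (x, x, r)) w₀ = -deriv (fun r => f (x, x, r)) w₀ := by
        rw [deriv.fun_neg]
      have hzero : deriv (fun r => h (x, x, r)) w₀ = 0 := by
        rw [hdh, hdf, df0 x hx x hx w₀ hw₀, neg_zero]
      have hnz : deriv (fun r => h (x, x, r)) w₀ ≠ 0 := by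
        rw [derh x hx x hx w₀ hw₀]
        exact mul_ne_zero hψx (pow_ne_zero 2 (hh0 _ (hmem hx hx hw₀)))
      exact hnz hzero
    have dh0 : ∀ u ∈ I, ∀ v ∈ I, ∀ w ∈ J, deriv (fun r => h (u, v, r)) w = 0 := by
      intro u hu v hv w hw
      rw [derh u hu v hv w hw, ψ0 u hu, zero_mul]
    refine Or.inr ⟨⟨df0, dh0⟩, ?_⟩
    rintro ⟨hne, -⟩
    exact hne u₀ hu₀ u₀ hu₀ w₀ hw₀ (df0 u₀ hu₀ u₀ hu₀ w₀ hw₀)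
  · -- Case 1
    push_neg at hc
    have dfne : ∀ u ∈ I, ∀ v ∈ I, ∀ w ∈ J, deriv (fun r => f (u, v, r)) w ≠ 0 := by
      intro u hu v hv w hw
      rw [derf u hu v hv w hw]
      exact mul_ne_zero (hc v hv) (pow_ne_zero 2 (hf0 _ (hmem hu hv hw)))
    -- smoothness of φ
    have hφs : ContDiffOn ℝ (⊤ : ℕ∞) φ I := by
      have hnum := volterra_slice_deriv_contDiffOn hU hfs
        (u₀ := u₀) (w₀ := w₀) (I := I) (fun v hv => hmem hu₀ hv hw₀)
      have hι : ContDiff ℝ (⊤ : ℕ∞) (fun v : ℝ => ((u₀, v, w₀) : ℝ × ℝ × ℝ)) :=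
        contDiff_const.prodMk (contDiff_id.prodMk contDiff_const)
      have hden : ContDiffOn ℝ (⊤ : ℕ∞) (fun v : ℝ => (f (u₀, v, w₀))^2) I :=
        (hfs.comp hι.contDiffOn (fun v hv => hmem hu₀ hv hw₀)).pow 2
      exact hnum.div hden fun v hv => pow_ne_zero 2 (hf0 _ (hmem hu₀ hv hw₀))
    set a : ℝ → ℝ := fun v => -(φ v)⁻¹ with hadef
    have ha0 : ∀ v ∈ I, a v ≠ 0 := fun v hv =>
      neg_ne_zero.mpr (inv_ne_zero (hc v hv))
    have has : ContDiffOn ℝ (⊤ : ℕ∞) a I := (hφs.inv hc).neg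
    clear_value φ ψ
    have haφ : ∀ v ∈ I, a v * φ v = -1 := by
      intro v hv
      show -(φ v)⁻¹ * φ v = -1
      rw [neg_mul, inv_mul_cancel₀ (hc v hv)]
    set b : ℝ × ℝ → ℝ := fun p => a p.2 / f (p.1, p.2, w₀) - w₀ with hbdef
    have hbs : ContDiffOn ℝ (⊤ : ℕ∞) b (I ×ˢ I) := by
      have hι2 : ContDiff ℝ (⊤ : ℕ∞) (fun p : ℝ × ℝ => ((p.1, p.2, w₀) : ℝ × ℝ × ℝ)) :=
        contDiff_fst.prodMk (contDiff_snd.prodMk contDiff_const)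
      have hf2 : ContDiffOn ℝ (⊤ : ℕ∞) (fun p : ℝ × ℝ => f (p.1, p.2, w₀)) (I ×ˢ I) :=
        hfs.comp hι2.contDiffOn (fun p hp => hmem hp.1 hp.2 hw₀)
      have ha2 : ContDiffOn ℝ (⊤ : ℕ∞) (fun p : ℝ × ℝ => a p.2) (I ×ˢ I) :=
        has.comp contDiff_snd.contDiffOn (fun p hp => hp.2)
      exact (ha2.div hf2 fun p hp => hf0 _ (hmem hp.1 hp.2 hw₀)).sub contDiffOn_const
    -- the key constancy claim
    have key : ∀ u ∈ I, ∀ v ∈ I, ∀ w ∈ J,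
        a v / f (u, v, w) - w = b (u, v) := by
      intro u hu v hv w hw
      have hJconv : Convex ℝ J := hJc.convex
      set g : ℝ → ℝ := fun w => a v / f (u, v, w) - w with hgdef
      have hg : ∀ x ∈ J, HasDerivAt g 0 x := by
        intro x hx
        have hfd := volterra_slice_hasDerivAt hU hfs (hmem hu hv hx)
        have hfd' : HasDerivAt (fun r => f (u, v, r))
            (deriv (fun r => f (u, v, r)) x) x := hfd.deriv ▸ hfd
        have hfne := hf0 _ (hmem hu hv hx)
        have h1 : HasDerivAt (fun r => a v / f (u, v, r))
            ((0 * f (u, v, x) - a v * deriv (fun r => f (u, v, r)) x)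
              / (f (u, v, x))^2) x :=
          (hasDerivAt_const x (a v)).div hfd' hfne
        have h2 := h1.sub (hasDerivAt_id x)
        have hval : (0 * f (u, v, x) - a v * deriv (fun r => f (u, v, r)) x)
            / (f (u, v, x))^2 - 1 = 0 := by
          rw [derf u hu v hv x hx]
          rw [sub_eq_zero, div_eq_one_iff_eq (pow_ne_zero 2 hfne)]
          linear_combination (-(f (u, v, x))^2) * haφ v hv
        rw [hval] at h2
        exact h2
      have hgdiff : DifferentiableOn ℝ g J :=
        fun x hx => ((hg x hx).differentiableAt).differentiableWithinAt
      have hgd0 : ∀ x ∈ J, fderivWithin ℝ g J x = 0 := by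
        intro x hx
        rw [fderivWithin_of_isOpen hJ hx, (hg x hx).hasFDerivAt.fderiv]
        ext
        simp
      exact hJconv.is_const_of_fderivWithin_eq_zero hgdiff hgd0 hw hw₀
    have wbne : ∀ u ∈ I, ∀ v ∈ I, ∀ w ∈ J, w + b (u, v) ≠ 0 ∧
        w + b (u, v) = a v / f (u, v, w) := by
      intro u hu v hv w hw
      have hk := key u hu v hv w hw
      have heq : w + b (u, v) = a v / f (u, v, w) := by linarith
      refine ⟨?_, heq⟩
      rw [heq]
      exact div_ne_zero (ha0 v hv) (hf0 _ (hmem hu hv hw))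
    refine Or.inl ⟨⟨dfne, a, b, has, ha0, hbs, ?_⟩, ?_⟩
    · intro u hu v hv w hw
      obtain ⟨hne, heq⟩ := wbne u hu v hv w hw
      have hfne := hf0 _ (hmem hu hv hw)
      constructor
      · rw [heq]
        field_simp
        rw [div_self (ha0 v hv)]
      · have hA := A' u hu v hv w hw
        have hφu := hc u hu
        have hφv := hc v hv
        have hfeq : f (u, v, w) = a v / (w + b (u, v)) := by
          rw [heq]; field_simp; rw [div_self (ha0 v hv)]
        have haφu := haφ u hu
        have haφv := haφ v hv
        -- φ v * f + φ u * h = 0 ⟹ h = -(φ v / φ u) f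
        have hh : h (u, v, w) = -(φ v * f (u, v, w)) / φ u := by
          field_simp
          linarith
        rw [hh, hfeq]
        have hX : φ v * (a v / (w + b (u, v))) * (w + b (u, v)) = -1 := by
          rw [mul_assoc, div_mul_cancel₀ _ hne]; linarith
        rw [div_eq_div_iff hφu hne]
        linear_combination -hX + haφu
    · rintro ⟨hz, -⟩
      exact dfne u₀ hu₀ u₀ hu₀ w₀ hw₀ (hz u₀ hu₀ u₀ hu₀ w₀ hw₀)
end

section
/- Let I ⊆ ℝ be an open interval, k : I → ℝ continuous and nowhere zero, and c : I×I → ℝ twice continuously differentiable, satisfying ∂₁∂₂ c(u,v) = k(u)·∂₂c(u,v) and ∂₁∂₂ c(u,v) = k(v)·∂₁c(u,v) for all u, v ∈ I. Then there exist constants α, β such that c(u,v) = α·z(u)·z(v) + β for all u, v ∈ I, where z : I → ℝ is any fixed positive solution of z′ = k·z (i.e. z = exp(K) with K an antiderivative of k). -/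
/-!
For fixed `v`, the first equation says that `u ↦ ∂ᵥc(u, v)` solves the same linear equation
`f' = k f` as `z`, so `∂ᵥc(u, v) = k(v) ψ(v) z(u)`; the second equation then turns this into
`∂ᵤc(u, v) = ψ(v) z'(u)`, whence `c(u, v) = c(u₀, v) + ψ(v) (z(u) - z(u₀))`. As `z' = k z ≠ 0`,
`z` takes a value `z(u₁) ≠ z(u₀)`, and differentiating `c(u₁, v) - c(u₀, v) = ψ(v) (z(u₁) - z(u₀))`
in `v` shows that `ψ` solves `ψ' = k ψ` too. Hence `ψ = α z`, and the column `u = u₀` supplies `β`.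
-/

open Topology

theorem exists_mem_ne_of_hasDerivAt {𝕜 F : Type*} [NontriviallyNormedField 𝕜]
    [NormedAddCommGroup F] [NormedSpace 𝕜 F] {s : Set 𝕜} {f : 𝕜 → F} {f' : F} {x : 𝕜}
    (hs : s ∈ 𝓝 x) (hf : HasDerivAt f f' x) (hf' : f' ≠ 0) :
    ∃ y ∈ s, f y ≠ f x := by
  obtain ⟨y, hy, hys⟩ := ((hf.eventually_ne hf').and (mem_nhdsWithin_of_mem_nhds hs)).exists
  exact ⟨y, hys, hy⟩

section LinearODE

variable {𝕜 : Type*} [RCLike 𝕜] {s : Set 𝕜} {k f z z' : 𝕜 → 𝕜}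

theorem IsOpen.exists_eq_const_mul_of_hasDerivAt_mul (hs : IsOpen s) (hs' : IsPreconnected s)
    (hz : ∀ x ∈ s, HasDerivAt z (k x * z x) x) (hz0 : ∀ x ∈ s, z x ≠ 0)
    (hf : ∀ x ∈ s, HasDerivAt f (k x * f x) x) : ∃ a, ∀ x ∈ s, f x = a * z x := by
  have hq : ∀ x ∈ s, HasDerivAt (fun x => f x / z x) 0 x := fun x hx => by
    have h := (hf x hx).div (hz x hx) (hz0 x hx)
    rwa [show k x * f x * z x - f x * (k x * z x) = 0 by ring, zero_div] at h
  obtain ⟨a, ha⟩ := hs.exists_is_const_of_deriv_eq_zero hs'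
    (fun x hx => (hq x hx).differentiableAt.differentiableWithinAt) fun x hx => (hq x hx).deriv
  exact ⟨a, fun x hx => by rw [← ha x hx, div_mul_cancel₀ _ (hz0 x hx)]⟩

theorem IsOpen.sub_eq_const_mul_sub_of_hasDerivAt (hs : IsOpen s) (hs' : IsPreconnected s)
    {a : 𝕜} (hz : ∀ x ∈ s, HasDerivAt z (z' x) x) (hf : ∀ x ∈ s, HasDerivAt f (a * z' x) x)
    {x y : 𝕜} (hx : x ∈ s) (hy : y ∈ s) : f x - f y = a * (z x - z y) := by
  obtain ⟨b, hb⟩ := hs.exists_eq_add_of_deriv_eq hs'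
    (fun x hx => (hf x hx).differentiableAt.differentiableWithinAt)
    (fun x hx => ((hz x hx).const_mul a).differentiableAt.differentiableWithinAt)
    fun x hx => ((hf x hx).deriv.trans ((hz x hx).const_mul a).deriv.symm)
  rw [hb hx, hb hy]
  ring

end LinearODE

section PartialDerivatives

variable {𝕜 G : Type*} [NontriviallyNormedField 𝕜] [NormedAddCommGroup G] [NormedSpace 𝕜 G]
  {c : 𝕜 → 𝕜 → G} {U : Set (𝕜 × 𝕜)} {n : WithTop ℕ∞} {u v : 𝕜}

theorem ContDiffOn.differentiableAt_fst_of_isOpen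
    (hc : ContDiffOn 𝕜 n (fun p : 𝕜 × 𝕜 => c p.1 p.2) U) (hU : IsOpen U) (hn : n ≠ 0)
    (huv : (u, v) ∈ U) : DifferentiableAt 𝕜 (fun s => c s v) u :=
  ((hc.differentiableOn hn).differentiableAt (hU.mem_nhds huv)).comp (f := fun s => (s, v)) u
    (differentiableAt_id.prodMk (differentiableAt_const v))

theorem ContDiffOn.differentiableAt_snd_of_isOpen
    (hc : ContDiffOn 𝕜 n (fun p : 𝕜 × 𝕜 => c p.1 p.2) U) (hU : IsOpen U) (hn : n ≠ 0)
    (huv : (u, v) ∈ U) : DifferentiableAt 𝕜 (fun t => c u t) v :=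
  ((hc.differentiableOn hn).differentiableAt (hU.mem_nhds huv)).comp v
    ((differentiableAt_const u).prodMk differentiableAt_id)

theorem ContDiffOn.differentiableAt_deriv_snd_of_isOpen
    (hc : ContDiffOn 𝕜 2 (fun p : 𝕜 × 𝕜 => c p.1 p.2) U) (hU : IsOpen U) (huv : (u, v) ∈ U) :
    DifferentiableAt 𝕜 (fun s => deriv (fun t => c s t) v) u := by
  set F := fun p : 𝕜 × 𝕜 => c p.1 p.2
  have hline : Continuous fun s : 𝕜 => (s, v) := continuous_id.prodMk continuous_const
  have hDF : DifferentiableAt 𝕜 (fderiv 𝕜 F) (u, v) :=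
    ((hc.fderiv_of_isOpen hU (by norm_num : (1 : WithTop ℕ∞) + 1 ≤ 2)).differentiableOn
      one_ne_zero).differentiableAt (hU.mem_nhds huv)
  have hderiv : ∀ s, (s, v) ∈ U → deriv (fun t => c s t) v = fderiv 𝕜 F (s, v) (0, 1) :=
    fun s hs => (((hc.differentiableOn two_ne_zero).differentiableAt
      (hU.mem_nhds hs)).hasFDerivAt.comp_hasDerivAt v
        ((hasDerivAt_const v s).prodMk (hasDerivAt_id v))).deriv
  refine ((hDF.comp u (differentiableAt_id.prodMk (differentiableAt_const v))).clm_apply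
    (differentiableAt_const ((0 : 𝕜), (1 : 𝕜)))).congr_of_eventuallyEq ?_
  filter_upwards [hline.continuousAt.preimage_mem_nhds (hU.mem_nhds huv)] with s hs
  exact hderiv s hs

end PartialDerivatives

section Separation

variable {I : Set ℝ} {k z ψ : ℝ → ℝ} {c : ℝ → ℝ → ℝ}

theorem IsOpen.exists_deriv_snd_eq_mul (hI : IsOpen I) (hI' : IsPreconnected I)
    (hc : ContDiffOn ℝ 2 (fun p : ℝ × ℝ => c p.1 p.2) (I ×ˢ I))
    (hsep : ∀ u ∈ I, ∀ v ∈ I,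
      deriv (fun s => deriv (fun t => c s t) v) u = k u * deriv (fun t => c u t) v)
    (hz : ∀ u ∈ I, HasDerivAt z (k u * z u) u) (hz0 : ∀ u ∈ I, z u ≠ 0) :
    ∃ φ : ℝ → ℝ, ∀ u ∈ I, ∀ v ∈ I, deriv (fun t => c u t) v = φ v * z u := by
  choose! φ hφ using fun v hv => hI.exists_eq_const_mul_of_hasDerivAt_mul hI' hz hz0
    (f := fun s => deriv (fun t => c s t) v) fun u hu =>
      hsep u hu v hv ▸ (hc.differentiableAt_deriv_snd_of_isOpen (hI.prod hI) ⟨hu, hv⟩).hasDerivAt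
  exact ⟨φ, fun u hu v hv => hφ v hv u hu⟩

theorem IsOpen.exists_hasDerivAt_partials_eq_mul (hI : IsOpen I) (hI' : IsPreconnected I)
    (hk0 : ∀ u ∈ I, k u ≠ 0) (hc : ContDiffOn ℝ 2 (fun p : ℝ × ℝ => c p.1 p.2) (I ×ˢ I))
    (hsep1 : ∀ u ∈ I, ∀ v ∈ I,
      deriv (fun s => deriv (fun t => c s t) v) u = k u * deriv (fun t => c u t) v)
    (hsep2 : ∀ u ∈ I, ∀ v ∈ I,
      deriv (fun s => deriv (fun t => c s t) v) u = k v * deriv (fun s => c s v) u)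
    (hz : ∀ u ∈ I, HasDerivAt z (k u * z u) u) (hz0 : ∀ u ∈ I, z u ≠ 0) :
    ∃ ψ : ℝ → ℝ, (∀ u ∈ I, ∀ v ∈ I, HasDerivAt (fun t => c u t) (k v * ψ v * z u) v) ∧
      ∀ u ∈ I, ∀ v ∈ I, HasDerivAt (fun s => c s v) (ψ v * (k u * z u)) u := by
  obtain ⟨φ, hφ⟩ := hI.exists_deriv_snd_eq_mul hI' hc hsep1 hz hz0
  have hII : IsOpen (I ×ˢ I) := hI.prod hI
  refine ⟨fun v => φ v / k v, fun u hu v hv => ?_, fun u hu v hv => ?_⟩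
  · refine (hc.differentiableAt_snd_of_isOpen hII two_ne_zero ⟨hu, hv⟩).hasDerivAt.congr_deriv ?_
    rw [hφ u hu v hv, mul_div_cancel₀ _ (hk0 v hv)]
  · refine (hc.differentiableAt_fst_of_isOpen hII two_ne_zero ⟨hu, hv⟩).hasDerivAt.congr_deriv ?_
    have h := (hsep2 u hu v hv).symm.trans (hsep1 u hu v hv)
    rw [hφ u hu v hv] at h
    field_simp [hk0 v hv]
    linear_combination h

theorem IsOpen.exists_eq_const_mul_mul_add (hI : IsOpen I) (hI' : IsPreconnected I)
    {u₀ u₁ : ℝ} (hu₀ : u₀ ∈ I) (hu₁ : u₁ ∈ I) (hzu : z u₁ ≠ z u₀)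
    (hz : ∀ u ∈ I, HasDerivAt z (k u * z u) u) (hz0 : ∀ u ∈ I, z u ≠ 0)
    (hcv : ∀ u ∈ I, ∀ v ∈ I, HasDerivAt (fun t => c u t) (k v * ψ v * z u) v)
    (hrow : ∀ u ∈ I, ∀ v ∈ I, c u v - c u₀ v = ψ v * (z u - z u₀)) :
    ∃ α β : ℝ, ∀ u ∈ I, ∀ v ∈ I, c u v = α * z u * z v + β := by
  have hdiff : ∀ v ∈ I, HasDerivAt (fun t => c u₁ t - c u₀ t) (k v * (c u₁ v - c u₀ v)) v :=
    fun v hv => ((hcv u₁ hu₁ v hv).sub (hcv u₀ hu₀ v hv)).congr_deriv (by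
      rw [hrow u₁ hu₁ v hv]
      ring)
  obtain ⟨a, ha⟩ := hI.exists_eq_const_mul_of_hasDerivAt_mul hI' hz hz0 hdiff
  obtain ⟨α, hψ⟩ : ∃ α, ∀ v ∈ I, ψ v = α * z v := by
    refine ⟨a / (z u₁ - z u₀), fun v hv => ?_⟩
    rw [div_mul_eq_mul_div, eq_div_iff (sub_ne_zero.mpr hzu)]
    exact (hrow u₁ hu₁ v hv).symm.trans (ha v hv)
  have hcol : ∀ v ∈ I, c u₀ v - c u₀ u₀ = α * z u₀ * (z v - z u₀) := by
    refine fun v hv => hI.sub_eq_const_mul_sub_of_hasDerivAt hI' hz (fun w hw => ?_) hv hu₀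
    refine (hcv u₀ hu₀ w hw).congr_deriv ?_
    rw [hψ w hw]
    ring
  refine ⟨α, c u₀ u₀ - α * z u₀ * z u₀, fun u hu v hv => ?_⟩
  linear_combination hrow u hu v hv + hcol v hv + (z u - z u₀) * hψ v hv

end Separation

theorem mixed_partial_separation_general
    (I : Set ℝ) (hI : IsOpen I) (hIc : I.OrdConnected) (hIne : I.Nonempty)
    (k : ℝ → ℝ) (hk0 : ∀ u ∈ I, k u ≠ 0)
    (c : ℝ → ℝ → ℝ)
    (hc : ContDiffOn ℝ 2 (fun p : ℝ × ℝ => c p.1 p.2) (I ×ˢ I))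
    (hsep1 : ∀ u ∈ I, ∀ v ∈ I,
      deriv (fun s => deriv (fun t => c s t) v) u
        = k u * deriv (fun t => c u t) v)
    (hsep2 : ∀ u ∈ I, ∀ v ∈ I,
      deriv (fun s => deriv (fun t => c s t) v) u
        = k v * deriv (fun s => c s v) u)
    (z : ℝ → ℝ) (hzpos : ∀ v ∈ I, 0 < z v)
    (hz : ∀ v ∈ I, HasDerivAt z (k v * z v) v) :
    ∃ α β : ℝ, ∀ u ∈ I, ∀ v ∈ I, c u v = α * z u * z v + β := by
  obtain ⟨u₀, hu₀⟩ := hIne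
  have hIpc : IsPreconnected I := hIc.isPreconnected
  have hz0 : ∀ u ∈ I, z u ≠ 0 := fun u hu => (hzpos u hu).ne'
  obtain ⟨ψ, hcv, hcu⟩ :=
    hI.exists_hasDerivAt_partials_eq_mul hIpc hk0 hc hsep1 hsep2 hz hz0
  have hrow : ∀ u ∈ I, ∀ v ∈ I, c u v - c u₀ v = ψ v * (z u - z u₀) := fun u hu v hv =>
    hI.sub_eq_const_mul_sub_of_hasDerivAt hIpc hz (fun w hw => hcu w hw v hv) hu hu₀
  obtain ⟨u₁, hu₁, hzu₁⟩ := exists_mem_ne_of_hasDerivAt (hI.mem_nhds hu₀) (hz u₀ hu₀)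
    (mul_ne_zero (hk0 u₀ hu₀) (hz0 u₀ hu₀))
  exact hI.exists_eq_const_mul_mul_add hIpc hu₀ hu₁ hzu₁ hz hz0 hcv hrow

/-- separation of variables: if `c_{uv} = k(u) c_v = k(v) c_u`
with `k` nowhere zero, then `c(u,v) = α z(u) z(v) + β` where `z' = k z`,
`z > 0`. -/
theorem mixed_partial_separation
    (I : Set ℝ) (hI : IsOpen I) (hIc : I.OrdConnected) (hIne : I.Nonempty)
    (k : ℝ → ℝ) (hk : ContinuousOn k I) (hk0 : ∀ u ∈ I, k u ≠ 0)
    (c : ℝ → ℝ → ℝ)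
    (hc : ContDiffOn ℝ 2 (fun p : ℝ × ℝ => c p.1 p.2) (I ×ˢ I))
    (hsep1 : ∀ u ∈ I, ∀ v ∈ I,
      deriv (fun s => deriv (fun t => c s t) v) u
        = k u * deriv (fun t => c u t) v)
    (hsep2 : ∀ u ∈ I, ∀ v ∈ I,
      deriv (fun s => deriv (fun t => c s t) v) u
        = k v * deriv (fun s => c s v) u)
    (z : ℝ → ℝ) (hzpos : ∀ v ∈ I, 0 < z v)
    (hz : ∀ v ∈ I, HasDerivAt z (k v * z v) v) :
    ∃ α β : ℝ, ∀ u ∈ I, ∀ v ∈ I, c u v = α * z u * z v + β :=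
  mixed_partial_separation_general I hI hIc hIne k hk0 c hc hsep1 hsep2 z hzpos hz
end

section
/- Let μ, ν, α, λ be real numbers, and define the polynomials R(y) = −(3/2)μ y² + (αμ − ν) y + λ and S(y) = μ y + ν. If the identity S(y)·(2y·S(y) + R(y)) + (2S(y) + 2y·S′(y) + R′(y))·R(y) + 2 = 0 holds for all y ∈ ℝ, then μ = 0 and λν = −1. -/
theorem Cubic.eq_zero_of_forall_eval_eq_zero {R : Type*} [CommRing R] [IsDomain R] [Infinite R]
    {P : Cubic R} (h : ∀ x, P.a * x ^ 3 + P.b * x ^ 2 + P.c * x + P.d = 0) : P = 0 := by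
  rw [← Cubic.toPoly_eq_zero_iff]
  exact Polynomial.funext fun x => by simpa [Cubic.toPoly] using h x

/-- the polynomial identity
`S(y)(2y S(y) + R(y)) + (2S(y) + 2y S'(y) + R'(y)) R(y) + 2 = 0` forces
`μ = 0` and `λν = -1`, where `R(y) = -(3/2)μy² + (αμ-ν)y + λ`,
`S(y) = μy + ν`. -/
theorem polynomial_identity_forces_mu_zero
    (μ ν α lam : ℝ)
    (hid : ∀ y : ℝ,
      (μ * y + ν) * (2 * y * (μ * y + ν)
          + (-(3/2) * μ * y^2 + (α * μ - ν) * y + lam))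
        + (2 * (μ * y + ν) + 2 * y * μ + (-(3) * μ * y + (α * μ - ν)))
            * (-(3/2) * μ * y^2 + (α * μ - ν) * y + lam)
        + 2 = 0) :
    μ = 0 ∧ lam * ν = -1 := by
  have hcubic : (⟨-μ ^ 2, α * μ ^ 2 / 2 - μ * ν, 2 * μ * lam + α * μ * ν + α ^ 2 * μ ^ 2,
      2 * lam * ν + α * μ * lam + 2⟩ : Cubic ℝ) = 0 :=
    Cubic.eq_zero_of_forall_eval_eq_zero fun y => by rw [← hid y]; ring
  obtain ⟨hlead, -, -, hconst⟩ := Cubic.mk.inj (hcubic : _ = (⟨0, 0, 0, 0⟩ : Cubic ℝ))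
  have hμ : μ = 0 := by simpa using hlead
  subst hμ
  exact ⟨rfl, by linarith⟩
end

section
/- Let ε ∈ ℝ and let I ⊆ ℝ be a nonempty open interval with −ε ∉ I. Define y : I → ℝ by y(v) = (1 − v²)/(v + ε)². Then the identity (v + ε)·y′(v) = −y(v) − 1 holds for all v ∈ I if and only if ε² = 1. -/
/-!
For `y = (1 - v²)/(v + ε)²` the defect `(v + ε) y' + y + 1` equals `(ε² - 1)/(v + ε)²`, so the
identity holds at one point of `I` iff it holds at all of them iff `ε² = 1`.
-/

lemma hasDerivAt_one_sub_sq_div_add_sq {ε v : ℝ} (hv : v + ε ≠ 0) :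
    HasDerivAt (fun v : ℝ => (1 - v ^ 2) / (v + ε) ^ 2) (-2 * (ε * v + 1) / (v + ε) ^ 3) v := by
  have hnum : HasDerivAt (fun v : ℝ => 1 - v ^ 2) (-(2 * v)) v := by
    simpa using (hasDerivAt_pow 2 v).const_sub 1
  have hden : HasDerivAt (fun v : ℝ => (v + ε) ^ 2) (2 * (v + ε)) v := by
    simpa using ((hasDerivAt_id' v).add_const ε).fun_pow 2
  refine (hnum.div hden (pow_ne_zero 2 hv)).congr_deriv ?_
  field_simp
  ring

lemma add_mul_deriv_add_add_one {ε v : ℝ} (hv : v + ε ≠ 0) :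
    (v + ε) * deriv (fun v : ℝ => (1 - v ^ 2) / (v + ε) ^ 2) v + (1 - v ^ 2) / (v + ε) ^ 2 + 1
      = (ε ^ 2 - 1) / (v + ε) ^ 2 := by
  rw [(hasDerivAt_one_sub_sq_div_add_sq hv).deriv]
  field_simp
  ring

lemma add_mul_deriv_eq_neg_sub_one_iff {ε v : ℝ} (hv : v + ε ≠ 0) :
    (v + ε) * deriv (fun v : ℝ => (1 - v ^ 2) / (v + ε) ^ 2) v = -((1 - v ^ 2) / (v + ε) ^ 2) - 1
      ↔ ε ^ 2 = 1 := by
  rw [eq_sub_iff_add_eq, eq_neg_iff_add_eq_zero, add_right_comm, add_mul_deriv_add_add_one hv,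
    div_eq_zero_iff, sub_eq_zero, or_iff_left (pow_ne_zero 2 hv)]

theorem consistency_iff_eps_sq_one_general
    (ε : ℝ) (I : Set ℝ)
    (hIne : I.Nonempty)
    (hε : -ε ∉ I)
    (y : ℝ → ℝ) (hy : ∀ v, y v = (1 - v^2) / (v + ε)^2) :
    (∀ v ∈ I, (v + ε) * deriv y v = -y v - 1) ↔ ε^2 = 1 := by
  obtain rfl : y = fun v => (1 - v ^ 2) / (v + ε) ^ 2 := funext hy
  have hpole : ∀ v ∈ I, v + ε ≠ 0 := fun v hv h => hε (by rwa [← eq_neg_of_add_eq_zero_left h])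
  obtain ⟨v₀, hv₀⟩ := hIne
  exact ⟨fun h => (add_mul_deriv_eq_neg_sub_one_iff (hpole v₀ hv₀)).mp (h v₀ hv₀),
    fun h v hv => (add_mul_deriv_eq_neg_sub_one_iff (hpole v hv)).mpr h⟩

/-- consistency of the reduced ODE system: with
`y(v) = (1 - v²)/(v + ε)²` on an open interval avoiding `-ε`, the identity
`(v + ε) y'(v) = -y(v) - 1` holds on `I` iff `ε² = 1`. -/
theorem consistency_iff_eps_sq_one
    (ε : ℝ) (I : Set ℝ)
    (hI : IsOpen I) (hIc : I.OrdConnected) (hIne : I.Nonempty)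
    (hε : -ε ∉ I)
    (y : ℝ → ℝ) (hy : ∀ v, y v = (1 - v^2) / (v + ε)^2) :
    (∀ v ∈ I, (v + ε) * deriv y v = -y v - 1) ↔ ε^2 = 1 :=
  consistency_iff_eps_sq_one_general ε I hIne hε y hy
end

section
/- There do not exist real constants μ, ν, β, λ, a nonempty open interval I ⊆ ℝ, and differentiable functions a, z : I → ℝ with z nowhere zero and z′ nowhere zero on I, such that for all v ∈ I: a′(v) = μ/z(v) + ν; −β·a′(v) − μβ/z(v) + μ·z(v) = λ; and −β·a(v)² = 1 − v². -/
/-!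
Differentiating `-β a² = 1 - v²` gives `β a a' = v`. If `μ = 0`, then `a' = ν` is constant, so
`β ν a = v`; differentiating once more gives `β ν² = 1`, and squaring `β ν a = v` turns the
constraint into `v² = v² - 1`. If `μ ≠ 0`, substituting `a'` into the second equation and
clearing denominators shows that `z` is a root of the quadratic `μ X² - (λ + β ν) X - 2 μ β`
at every point; differentiating, `(2 μ z - λ - β ν) z' = 0`, so `z' ≠ 0` pins `z` to the
vertex of the quadratic, a constant, and then `z' = 0`.
-/

open Set

theorem mul_deriv_eq_of_neg_mul_sq_eq_one_sub_sq {β : ℝ} {I : Set ℝ} {a : ℝ → ℝ}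
    (hI : IsOpen I) (ha : ∀ v ∈ I, DifferentiableAt ℝ a v)
    (h : ∀ v ∈ I, -β * a v ^ 2 = 1 - v ^ 2) {v : ℝ} (hv : v ∈ I) :
    β * a v * deriv a v = v := by
  have hd := EqOn.deriv (f := fun v ↦ -β * a v ^ 2) (g := fun v ↦ 1 - v ^ 2) h hI hv
  rw [(((ha v hv).hasDerivAt.fun_pow 2).const_mul (-β)).deriv,
    ((hasDerivAt_pow 2 v).const_sub 1).deriv] at hd
  linear_combination (-1 / 2 : ℝ) * hd

theorem not_forall_deriv_eq_of_neg_mul_sq_eq_one_sub_sq {β ν x : ℝ} {I : Set ℝ} {a : ℝ → ℝ}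
    (hI : IsOpen I) (hx : x ∈ I) (ha : ∀ v ∈ I, DifferentiableAt ℝ a v)
    (h : ∀ v ∈ I, -β * a v ^ 2 = 1 - v ^ 2) :
    ¬ ∀ v ∈ I, deriv a v = ν := by
  intro hν
  have hlin : ∀ v ∈ I, β * ν * a v = v := fun v hv ↦ by
    simpa [hν v hv, mul_right_comm] using mul_deriv_eq_of_neg_mul_sq_eq_one_sub_sq hI ha h hv
  have hβν : β * ν * ν = 1 := by
    have hd := EqOn.deriv (f := fun v ↦ β * ν * a v) (g := id) hlin hI hx
    rwa [((ha x hx).hasDerivAt.const_mul (β * ν)).deriv, deriv_id, hν x hx] at hd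
  exact zero_ne_one <| by
    linear_combination h x hx + (β * ν * a x + x) * hlin x hx - β * a x ^ 2 * hβν

theorem not_forall_quadratic_eq_zero_of_deriv_ne_zero {μ b c x : ℝ} {I : Set ℝ} {z : ℝ → ℝ}
    (hI : IsOpen I) (hx : x ∈ I) (hμ : μ ≠ 0) (hz : ∀ v ∈ I, DifferentiableAt ℝ z v)
    (hz' : ∀ v ∈ I, deriv z v ≠ 0) :
    ¬ ∀ v ∈ I, μ * z v ^ 2 + b * z v + c = 0 := by
  intro hq
  have hvertex : ∀ v ∈ I, z v = -b / (2 * μ) := fun v hv ↦ by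
    have hd := EqOn.deriv (f := fun v ↦ μ * z v ^ 2 + b * z v + c) (g := fun _ ↦ 0) hq hI hv
    have hzd := (hz v hv).hasDerivAt
    rw [(((hzd.fun_pow 2).const_mul μ).fun_add (hzd.const_mul b)).add_const c |>.deriv,
      deriv_const] at hd
    have hroot : 2 * μ * z v + b = 0 := by
      refine (mul_eq_zero.mp ?_).resolve_right (hz' v hv)
      linear_combination hd
    field_simp
    linear_combination hroot
  exact hz' x hx <| by rw [EqOn.deriv hvertex hI hx, deriv_const]

/-- the overdetermined ODE system (az1) with `γ = 0` has no
solutions with `z` and `z'` nowhere zero. -/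
theorem az1_gamma_zero_no_solution :
    ¬ ∃ (μ ν β lam : ℝ) (I : Set ℝ) (a z : ℝ → ℝ),
      IsOpen I ∧ I.OrdConnected ∧ I.Nonempty ∧
      (∀ v ∈ I, DifferentiableAt ℝ a v) ∧
      (∀ v ∈ I, DifferentiableAt ℝ z v) ∧
      (∀ v ∈ I, z v ≠ 0) ∧
      (∀ v ∈ I, deriv z v ≠ 0) ∧
      (∀ v ∈ I, deriv a v = μ / z v + ν) ∧
      (∀ v ∈ I, -β * deriv a v - μ * β / z v + μ * z v = lam) ∧
      (∀ v ∈ I, -β * (a v)^2 = 1 - v^2) := by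
  rintro ⟨μ, ν, β, lam, I, a, z, hI, -, ⟨x, hx⟩, ha, hz, hz0, hz', h1, h2, h3⟩
  by_cases hμ : μ = 0
  · subst hμ
    exact not_forall_deriv_eq_of_neg_mul_sq_eq_one_sub_sq hI hx ha h3 fun v hv ↦ by
      simpa using h1 v hv
  · refine not_forall_quadratic_eq_zero_of_deriv_ne_zero (b := -(lam + β * ν)) (c := -2 * μ * β)
      hI hx hμ hz hz' fun v hv ↦ ?_
    have e := h2 v hv
    rw [h1 v hv] at e
    field_simp [hz0 v hv] at e
    linear_combination e
end

section
/- Let E be a real inner product space and for each n ∈ ℤ let V_n : ℝ → E be differentiable with V_{n+1}(x) + V_n(x) ≠ 0 for all n and x. Suppose that for all n and x: V_n′ = (V_{n+1}+V_n)/‖V_{n+1}+V_n‖² − (V_n+V_{n−1})/‖V_n+V_{n−1}‖². Define W_n := (V_n+V_{n−1})/‖V_n+V_{n−1}‖². Then for all n and x: W_n′ = −P_{W_n}(W_{n+1} − W_{n−1}), where P_A(B) := 2⟨A,B⟩A − ⟨A,A⟩B. Equivalently, W satisfies the polynomial lattice W_x = −P_W(W_1 − W_{−1}). -/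
/-!
`W_n` is the image of `U_n = V_n + V_{n-1}` under the inversion `A ↦ A / ‖A‖²`, whose
differential at `A` is `−P_{A / ‖A‖²}` (`quadRep` below). By the spin-chain equation
`V_n' = W_{n+1} − W_n`, the derivative of `U_n` telescopes to `W_{n+1} − W_{n-1}`.
-/

open scoped RealInnerProductSpace

section QuadraticRepresentation

variable {E : Type*} [NormedAddCommGroup E] [InnerProductSpace ℝ E]

def quadRep (A B : E) : E := (2 * ⟪A, B⟫) • A - ⟪A, A⟫ • B

theorem HasDerivAt.inv_normSq_smul {U : ℝ → E} {D : E} {x : ℝ}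
    (hU : HasDerivAt U D x) (hx : U x ≠ 0) :
    HasDerivAt (fun y => (‖U y‖ ^ 2)⁻¹ • U y)
      (-quadRep ((‖U x‖ ^ 2)⁻¹ • U x) D) x := by
  have hsq : ‖U x‖ ^ 2 ≠ 0 := by positivity
  refine ((hU.norm_sq.inv hsq).smul hU).congr_deriv ?_
  simp only [quadRep, inner_smul_left, inner_smul_right, real_inner_self_eq_norm_sq,
    RCLike.conj_to_real, smul_smul, Pi.inv_apply]
  match_scalars <;> field_simp

end QuadraticRepresentation

/-- if `V` satisfies the discrete Heisenberg spin chain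
`V_x = (V₁+V)/‖V₁+V‖² − (V+V₋₁)/‖V+V₋₁‖²`, then `W = (V+V₋₁)/‖V+V₋₁‖²`
satisfies the polynomial lattice `W_x = −P_W(W₁ − W₋₁)`,
where `P_A(B) = 2⟨A,B⟩A − ⟨A,A⟩B`. -/
theorem heisenberg_W_lattice
    (E : Type*) [NormedAddCommGroup E] [InnerProductSpace ℝ E]
    (V : ℤ → ℝ → E)
    (hne : ∀ n x, V (n+1) x + V n x ≠ 0)
    (hV : ∀ (n : ℤ) (x : ℝ), HasDerivAt (V n)
      ((‖V (n+1) x + V n x‖^2)⁻¹ • (V (n+1) x + V n x)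
        - (‖V n x + V (n-1) x‖^2)⁻¹ • (V n x + V (n-1) x)) x)
    (W : ℤ → ℝ → E)
    (hW : ∀ n x, W n x = (‖V n x + V (n-1) x‖^2)⁻¹ • (V n x + V (n-1) x)) :
    ∀ (n : ℤ) (x : ℝ), HasDerivAt (W n)
      (-((2 * (inner ℝ (W n x) (W (n+1) x - W (n-1) x) : ℝ)) • W n x
          - ((inner ℝ (W n x) (W n x) : ℝ)) • (W (n+1) x - W (n-1) x))) x := by
  intro n x
  have hVW : ∀ m y, HasDerivAt (V m) (W (m+1) y - W m y) y := fun m y => by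
    simpa only [hW, add_sub_cancel_right] using hV m y
  have hU : HasDerivAt (fun y => V n y + V (n-1) y) (W (n+1) x - W (n-1) x) x := by
    simpa only [sub_add_cancel, sub_add_sub_cancel] using (hVW n x).fun_add (hVW (n-1) x)
  have hUx : V n x + V (n-1) x ≠ 0 := by simpa only [sub_add_cancel] using hne (n-1) x
  have hWn := hU.inv_normSq_smul hUx
  rw [← hW n x] at hWn
  exact hWn.congr_of_eventuallyEq (Filter.Eventually.of_forall (hW n))
end

section
/- Let E be a real inner product space, ε ∈ ℝ, and for each n ∈ ℤ let V_n : ℝ → E be differentiable with ⟨V_n, V_n⟩ = 1 and ⟨V_{n+1}, V_{n−1}⟩ ≠ 1 for all n, x, satisfying the lattice (V3): V_n′ = [(⟨V_n,V_{n−1}⟩+ε)(V_{n+1}+εV_n) − (⟨V_{n+1},V_n⟩+ε)(V_{n−1}+εV_n)] / (⟨V_{n+1},V_{n−1}⟩ − 1). Then the sequence Ṽ_n := (−1)ⁿ V_n satisfies ⟨Ṽ_n, Ṽ_n⟩ = 1, ⟨Ṽ_{n+1}, Ṽ_{n−1}⟩ ≠ 1, and the same lattice (V3) with ε replaced by −ε.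 -/
/-!
Flipping the sign of every odd-indexed vector preserves all the inner products
`⟨V_{n+1}, V_{n-1}⟩` and `⟨V_n, V_n⟩` and negates the neighbour products `⟨V_n, V_{n±1}⟩`.
So in the right-hand side of (V3) each factor `⟨V_n, V_{n±1}⟩ + ε` changes sign exactly when
`ε` does, and each `V_{n±1} + ε V_n` picks up the factor `-(-1)ⁿ`; the two signs combine into
the factor `(-1)ⁿ` by which `Ṽ_n′` differs from `V_n′`.
-/

open RealInnerProductSpace

namespace V3

variable {E : Type*} [NormedAddCommGroup E] [InnerProductSpace ℝ E]

/-- The right-hand side of lattice (V3) at a site with neighbours `u = V_{n-1}`, `w = V_{n+1}`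
and value `v = V_n`. -/
noncomputable def field (ε : ℝ) (u v w : E) : E :=
  (⟪w, u⟫ - 1)⁻¹ • ((⟪v, u⟫ + ε) • (w + ε • v) - (⟪w, v⟫ + ε) • (u + ε • v))

theorem inner_smul_smul_of_mul_self_eq_one {s : ℝ} (hs : s * s = 1) (v w : E) :
    ⟪s • v, s • w⟫ = ⟪v, w⟫ := by
  rw [real_inner_smul_left, real_inner_smul_right, ← mul_assoc, hs, one_mul]

theorem field_neg_smul {s : ℝ} (hs : s * s = 1) (ε : ℝ) (u v w : E) :
    field (-ε) (-s • u) (s • v) (-s • w) = s • field ε u v w := by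
  have hws : ⟪-s • w, -s • u⟫ = ⟪w, u⟫ :=
    inner_smul_smul_of_mul_self_eq_one (by rw [neg_mul_neg, hs]) w u
  have hvu : ⟪s • v, -s • u⟫ = -⟪v, u⟫ := by
    rw [neg_smul, inner_neg_right, inner_smul_smul_of_mul_self_eq_one hs]
  have hwv : ⟪-s • w, s • v⟫ = -⟪w, v⟫ := by
    rw [neg_smul, inner_neg_left, inner_smul_smul_of_mul_self_eq_one hs]
  simp only [field, hws, hvu, hwv, smul_sub, smul_add, smul_smul]
  match_scalars <;> ring

end V3

section NegOnePow

variable {α : Type*} [DivisionRing α]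

theorem neg_one_zpow_mul_self (n : ℤ) : (-1 : α) ^ n * (-1) ^ n = 1 := by
  rw [← zpow_add₀ (neg_ne_zero.mpr one_ne_zero), ← two_mul, zpow_mul]; norm_num

theorem neg_one_zpow_add_one (n : ℤ) : (-1 : α) ^ (n + 1) = -(-1) ^ n := by
  rw [zpow_add_one₀ (neg_ne_zero.mpr one_ne_zero), mul_neg_one]

theorem neg_one_zpow_sub_one (n : ℤ) : (-1 : α) ^ (n - 1) = -(-1) ^ n := by
  rw [zpow_sub_one₀ (neg_ne_zero.mpr one_ne_zero), inv_neg, inv_one, mul_neg_one]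

end NegOnePow

open V3 in
/-- the flip map `Ṽ_n = (−1)ⁿ V_n` maps solutions of lattice
(V3) with parameter `ε` to solutions of (V3) with parameter `−ε`. -/
theorem V3_flip_map
    (E : Type*) [NormedAddCommGroup E] [InnerProductSpace ℝ E]
    (ε : ℝ) (V : ℤ → ℝ → E)
    (hunit : ∀ (n : ℤ) (x : ℝ), (inner ℝ (V n x) (V n x) : ℝ) = 1)
    (hden : ∀ (n : ℤ) (x : ℝ), (inner ℝ (V (n+1) x) (V (n-1) x) : ℝ) ≠ 1)
    (hV : ∀ (n : ℤ) (x : ℝ), HasDerivAt (V n)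
      (((inner ℝ (V (n+1) x) (V (n-1) x) : ℝ) - 1)⁻¹ •
        (((inner ℝ (V n x) (V (n-1) x) : ℝ) + ε) • (V (n+1) x + ε • V n x)
          - ((inner ℝ (V (n+1) x) (V n x) : ℝ) + ε) • (V (n-1) x + ε • V n x))) x)
    (W : ℤ → ℝ → E)
    (hW : ∀ (n : ℤ) (x : ℝ), W n x = ((-1 : ℝ)^n) • V n x) :
    (∀ (n : ℤ) (x : ℝ), (inner ℝ (W n x) (W n x) : ℝ) = 1) ∧
    (∀ (n : ℤ) (x : ℝ), (inner ℝ (W (n+1) x) (W (n-1) x) : ℝ) ≠ 1) ∧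
    (∀ (n : ℤ) (x : ℝ), HasDerivAt (W n)
      (((inner ℝ (W (n+1) x) (W (n-1) x) : ℝ) - 1)⁻¹ •
        (((inner ℝ (W n x) (W (n-1) x) : ℝ) + (-ε)) • (W (n+1) x + (-ε) • W n x)
          - ((inner ℝ (W (n+1) x) (W n x) : ℝ) + (-ε)) •
              (W (n-1) x + (-ε) • W n x))) x) := by
  have hW_succ (n : ℤ) (x : ℝ) : W (n + 1) x = -(-1 : ℝ) ^ n • V (n + 1) x := by
    rw [hW, neg_one_zpow_add_one]
  have hW_pred (n : ℤ) (x : ℝ) : W (n - 1) x = -(-1 : ℝ) ^ n • V (n - 1) x := by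
    rw [hW, neg_one_zpow_sub_one]
  have hsq (n : ℤ) : -(-1 : ℝ) ^ n * -(-1) ^ n = 1 := by
    rw [neg_mul_neg, neg_one_zpow_mul_self]
  refine ⟨fun n x => ?_, fun n x => ?_, fun n x => ?_⟩
  · rw [hW, inner_smul_smul_of_mul_self_eq_one (neg_one_zpow_mul_self n), hunit]
  · rw [hW_succ, hW_pred, inner_smul_smul_of_mul_self_eq_one (hsq n)]
    exact hden n x
  · have hWn : W n = fun y => (-1 : ℝ) ^ n • V n y := funext (hW n)
    change HasDerivAt (W n) (field (-ε) (W (n - 1) x) (W n x) (W (n + 1) x)) x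
    rw [hW_succ, hW_pred, hW, field_neg_smul (neg_one_zpow_mul_self n), hWn]
    exact (hV n x).const_smul _
end

section
/- Let E be a real inner product space and let A, B, C ∈ E be unit vectors with A + B ≠ 0 and B + C ≠ 0. Then [‖B‖²A + ‖A‖²B]/‖A+B‖² − [‖C‖²B + ‖B‖²C]/‖B+C‖² = (A+B)/‖A+B‖² − (B+C)/‖B+C‖², and this vector is orthogonal to B. -/
/-! For unit vectors the weights `‖B‖²`, `‖A‖²` are `1`, so the lattice reduces to the spin chain.
Tangency comes from the fact that for `‖a‖ = ‖b‖` the vector `a + b` makes equal angles with `a`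
and `b`: `‖a + b‖² = 2 ⟪a, a + b⟫ = 2 ⟪b, a + b⟫`, so each of the two terms of the spin chain
has inner product `1/2` with `B`, and they cancel. -/

open RealInnerProductSpace

section EqualNorms

variable {E : Type*} [NormedAddCommGroup E] [InnerProductSpace ℝ E] {a b : E}

theorem norm_add_sq_eq_two_mul_inner_right_of_norm_eq (h : ‖a‖ = ‖b‖) :
    ‖a + b‖ ^ 2 = 2 * ⟪b, a + b⟫ := by
  rw [norm_add_sq_real, inner_add_right, real_inner_self_eq_norm_sq, real_inner_comm, h]
  ring

theorem inner_inv_norm_add_sq_smul_right_of_norm_eq (h : ‖a‖ = ‖b‖) (hab : a + b ≠ 0) :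
    ⟪b, (‖a + b‖ ^ 2)⁻¹ • (a + b)⟫ = 1 / 2 := by
  have hsq := norm_add_sq_eq_two_mul_inner_right_of_norm_eq h
  have hne : ⟪b, a + b⟫ ≠ 0 := fun h0 => hab (by simpa [h0] using hsq)
  rw [real_inner_smul_right, hsq]
  field_simp

theorem inner_inv_norm_add_sq_smul_left_of_norm_eq (h : ‖a‖ = ‖b‖) (hab : a + b ≠ 0) :
    ⟪a, (‖a + b‖ ^ 2)⁻¹ • (a + b)⟫ = 1 / 2 := by
  rw [add_comm] at hab ⊢
  exact inner_inv_norm_add_sq_smul_right_of_norm_eq h.symm hab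

end EqualNorms

/-- on the unit sphere the lattice for `Ṽ` coincides with the
discrete Heisenberg spin chain, and its right-hand side is tangent to the
sphere. -/
theorem tilde_lattice_on_sphere
    (E : Type*) [NormedAddCommGroup E] [InnerProductSpace ℝ E]
    (A B C : E)
    (hA : (inner ℝ A A : ℝ) = 1) (hB : (inner ℝ B B : ℝ) = 1)
    (hC : (inner ℝ C C : ℝ) = 1)
    (hAB : A + B ≠ 0) (hBC : B + C ≠ 0) :
    (‖A + B‖^2)⁻¹ • ((‖B‖^2) • A + (‖A‖^2) • B)
        - (‖B + C‖^2)⁻¹ • ((‖C‖^2) • B + (‖B‖^2) • C)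
      = (‖A + B‖^2)⁻¹ • (A + B) - (‖B + C‖^2)⁻¹ • (B + C) ∧
    (inner ℝ B ((‖A + B‖^2)⁻¹ • ((‖B‖^2) • A + (‖A‖^2) • B)
        - (‖B + C‖^2)⁻¹ • ((‖C‖^2) • B + (‖B‖^2) • C)) : ℝ) = 0 := by
  have hA₁ : ‖A‖ = 1 := by rw [norm_eq_sqrt_real_inner, hA, Real.sqrt_one]
  have hB₁ : ‖B‖ = 1 := by rw [norm_eq_sqrt_real_inner, hB, Real.sqrt_one]
  have hC₁ : ‖C‖ = 1 := by rw [norm_eq_sqrt_real_inner, hC, Real.sqrt_one]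
  have spin_chain :
      (‖A + B‖^2)⁻¹ • ((‖B‖^2) • A + (‖A‖^2) • B)
        - (‖B + C‖^2)⁻¹ • ((‖C‖^2) • B + (‖B‖^2) • C)
      = (‖A + B‖^2)⁻¹ • (A + B) - (‖B + C‖^2)⁻¹ • (B + C) := by
    simp only [hA₁, hB₁, hC₁, one_pow, one_smul]
  refine ⟨spin_chain, ?_⟩
  rw [spin_chain, inner_sub_right,
    inner_inv_norm_add_sq_smul_right_of_norm_eq (hA₁.trans hB₁.symm) hAB,
    inner_inv_norm_add_sq_smul_left_of_norm_eq (hB₁.trans hC₁.symm) hBC, sub_self]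
end

section
/- Let E be a real inner product space, let p, q, r : ℤ → ℝ and V : ℤ → E be arbitrary sequences, and define the operator S on sequences W : ℤ → E by (SW)_n := p_n W_{n−1} − p_{n+1} W_{n+1} − q_n ⟨V_n, W_{n−1}⟩ V_{n−1} + q_{n+1} ⟨V_n, W_{n+1}⟩ V_{n+1} + r_n (⟨V_{n−1}, W_n⟩ V_{n+1} − ⟨V_{n+1}, W_n⟩ V_{n−1}). Then S is skew-symmetric with respect to the pairing Σ_n ⟨·,·⟩: for all finitely supported sequences U, W : ℤ → E, Σ_{n∈ℤ} ⟨U_n, (SW)_n⟩ = − Σ_{n∈ℤ} ⟨W_n, (SU)_n⟩. -/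
/-!
Pairing `S W` against `U` and adding the same with `U` and `W` exchanged, every term of
`⟨Uₙ, (SW)ₙ⟩ + ⟨Wₙ, (SU)ₙ⟩` cancels against a term at the neighbouring site: the sum is a
discrete divergence `Φₙ - Φₙ₊₁` of a flux `Φ` built from `U`, `W` and their left shifts.
Since `Φ` is finitely supported, the divergence sums to zero over `ℤ`.
-/

open Function

open scoped RealInnerProductSpace

theorem finsum_sub_shift_eq_zero {M : Type*} [AddCommGroup M] {f : ℤ → M}
    (hf : (support f).Finite) : ∑ᶠ n, (f n - f (n + 1)) = 0 := by
  have hshift : (support fun n => f (n + 1)).Finite :=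
    hf.preimage (Equiv.addRight (1 : ℤ)).injective.injOn
  rw [finsum_sub_distrib hf hshift, sub_eq_zero]
  exact (finsum_comp_equiv (Equiv.addRight (1 : ℤ))).symm

section Inner

variable {α E : Type*} [NormedAddCommGroup E] [InnerProductSpace ℝ E]

theorem finite_support_inner_left {U : α → E} (hU : (support U).Finite) (X : α → E) :
    (support fun n => ⟪U n, X n⟫).Finite :=
  hU.subset fun n hn hUn => hn (by simp [hUn])

variable (p q r : ℤ → ℝ) (V : ℤ → E)

noncomputable def presymplecticOp (W : ℤ → E) (n : ℤ) : E :=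
  p n • W (n-1) - p (n+1) • W (n+1)
    - (q n * ⟪V n, W (n-1)⟫) • V (n-1)
    + (q (n+1) * ⟪V n, W (n+1)⟫) • V (n+1)
    + r n • (⟪V (n-1), W n⟫ • V (n+1) - ⟪V (n+1), W n⟫ • V (n-1))

def presymplecticFlux (U W : ℤ → E) (n : ℤ) : ℝ :=
  p n * (⟪U n, W (n-1)⟫ + ⟪W n, U (n-1)⟫)
    - q n * (⟪V n, W (n-1)⟫ * ⟪U n, V (n-1)⟫ + ⟪V n, U (n-1)⟫ * ⟪W n, V (n-1)⟫)

theorem inner_presymplecticOp_add_inner_presymplecticOp (U W : ℤ → E) (n : ℤ) :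
    ⟪U n, presymplecticOp p q r V W n⟫ + ⟪W n, presymplecticOp p q r V U n⟫
      = presymplecticFlux p q V U W n - presymplecticFlux p q V U W (n + 1) := by
  simp only [presymplecticOp, presymplecticFlux, inner_sub_right, inner_add_right,
    inner_smul_right, add_sub_cancel_right]
  rw [real_inner_comm (U n) (W (n+1)), real_inner_comm (W n) (U (n+1)),
    real_inner_comm (V n) (W (n+1)), real_inner_comm (U n) (V (n+1)),
    real_inner_comm (V n) (U (n+1)), real_inner_comm (W n) (V (n+1)),
    real_inner_comm (V (n-1)) (W n), real_inner_comm (V (n-1)) (U n)]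
  ring

theorem finite_support_presymplecticFlux {U W : ℤ → E} (hU : (support U).Finite)
    (hW : (support W).Finite) : (support (presymplecticFlux p q V U W)).Finite :=
  (hU.union hW).subset fun n hn => by
    by_contra hUW
    simp only [Set.mem_union, mem_support, not_or, not_not] at hUW
    exact hn (by simp [presymplecticFlux, hUW.1, hUW.2])

end Inner

/-- the operator
`S = pT⁻¹ − p₁T − qV₋₁V^⊤T⁻¹ + q₁V₁V^⊤T + r(V₁V₋₁^⊤ − V₋₁V₁^⊤)`
is skew-symmetric with respect to the pairing `∑ₙ ⟨·,·⟩`. -/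
theorem presymplectic_operator_skew_symmetric
    (E : Type*) [NormedAddCommGroup E] [InnerProductSpace ℝ E]
    (p q r : ℤ → ℝ) (V : ℤ → E)
    (S : (ℤ → E) → ℤ → E)
    (hS : ∀ (W : ℤ → E) (n : ℤ), S W n =
      p n • W (n-1) - p (n+1) • W (n+1)
        - (q n * (inner ℝ (V n) (W (n-1)) : ℝ)) • V (n-1)
        + (q (n+1) * (inner ℝ (V n) (W (n+1)) : ℝ)) • V (n+1)
        + r n • ((inner ℝ (V (n-1)) (W n) : ℝ) • V (n+1)
            - (inner ℝ (V (n+1)) (W n) : ℝ) • V (n-1))) :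
    ∀ U W : ℤ → E, {n : ℤ | U n ≠ 0}.Finite → {n : ℤ | W n ≠ 0}.Finite →
      (∑ᶠ n : ℤ, (inner ℝ (U n) (S W n) : ℝ))
        = - ∑ᶠ n : ℤ, (inner ℝ (W n) (S U n) : ℝ) := by
  intro U W hU hW
  obtain rfl : S = presymplecticOp p q r V := funext fun W => funext (hS W)
  rw [eq_neg_iff_add_eq_zero,
    ← finsum_add_distrib (finite_support_inner_left hU _) (finite_support_inner_left hW _),
    finsum_congr (inner_presymplecticOp_add_inner_presymplecticOp p q r V U W)]
  exact finsum_sub_shift_eq_zero (finite_support_presymplecticFlux p q V hU hW)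
end
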